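/- (Growth for bounded-type rotation numbers, key estimate) Let g : S¹ → ℝ have bounded variation V and ∫ g dμ = 0 for the unique invariant measure μ of a circle homeomorphism φ with irrational rotation number ρ of bounded type (q_{k+1}/q_k ≤ C for all k). Assuming the Ostrowski decomposition: every n can be written n = Σ_{k=0}^{m} c_k q_k with 0 ≤ c_k ≤ q_{k+1}/q_k and m ≤ 2 log n / log 2, together with the Denjoy–Koksma inequality, conclude |Σ_{j=0}^{n-1} g(φ^j x)| ≤ C·V·(2 log n / log 2 + 1) for all x and n ≥ 2. -/
import Mathlib


open Real Finset MeasureTheory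

lemma birkhoff_split (φ : UnitAddCircle → UnitAddCircle) (g : UnitAddCircle → ℝ)
    (x : UnitAddCircle) (a b : ℕ) :
    ∑ j ∈ Finset.range (a + b), g (φ^[j] x) =
      (∑ j ∈ Finset.range a, g (φ^[j] x)) +
        ∑ j ∈ Finset.range b, g (φ^[j] (φ^[a] x)) := by
  induction b with
  | zero => simp
  | succ b ih =>
      rw [← Nat.add_assoc, Finset.sum_range_succ, Finset.sum_range_succ, ih,
        add_assoc, ← Function.iterate_add_apply, Nat.add_comm b a]

theorem birkhoff_log_bound_bounded_type
    (φ : UnitAddCircle → UnitAddCircle)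
    (μ : Measure UnitAddCircle) [IsProbabilityMeasure μ]
    (g : UnitAddCircle → ℝ) (V : ℝ) (hV : 0 ≤ V)
    (hint : ∫ x, g x ∂μ = 0)
    (q : ℕ → ℕ) (hqpos : ∀ k : ℕ, 1 ≤ q k)
    (C : ℝ) (hC : ∀ k : ℕ, ((q (k + 1) : ℝ) / (q k : ℝ)) ≤ C)
    (hDK : ∀ (x : UnitAddCircle) (k : ℕ),
      |(∑ i ∈ Finset.range (q k), g (φ^[i] x)) - (q k : ℝ) * ∫ t, g t ∂μ| ≤ V)
    (hOstrowski : ∀ n : ℕ, 2 ≤ n → ∃ (m : ℕ) (c : ℕ → ℕ),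
      (m : ℝ) ≤ 2 * Real.log n / Real.log 2 ∧
      (∀ k : ℕ, k ≤ m → (c k : ℝ) ≤ (q (k + 1) : ℝ) / (q k : ℝ)) ∧
      n = ∑ k ∈ Finset.range (m + 1), c k * q k) :
    ∀ (x : UnitAddCircle) (n : ℕ), 2 ≤ n →
      |∑ j ∈ Finset.range n, g (φ^[j] x)| ≤ C * V * (2 * Real.log n / Real.log 2 + 1) := by
  -- simplified Denjoy–Koksma
  have hDK' : ∀ (y : UnitAddCircle) (k : ℕ),
      |∑ i ∈ Finset.range (q k), g (φ^[i] y)| ≤ V := by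
    intro y k
    have := hDK y k
    simpa [hint] using this
  have hC0 : 0 ≤ C := le_trans (by positivity) (hC 0)
  -- single block bound
  have blockA : ∀ (y : UnitAddCircle) (c k : ℕ),
      |∑ j ∈ Finset.range (c * q k), g (φ^[j] y)| ≤ (c : ℝ) * V := by
    intro y c k
    induction c generalizing y with
    | zero => simp
    | succ c ih =>
        have hsplit := birkhoff_split φ g y (c * q k) (q k)
        rw [Nat.succ_mul]
        rw [hsplit]
        calc |(∑ j ∈ Finset.range (c * q k), g (φ^[j] y)) +
              ∑ j ∈ Finset.range (q k), g (φ^[j] (φ^[c * q k] y))|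
            ≤ |∑ j ∈ Finset.range (c * q k), g (φ^[j] y)| +
              |∑ j ∈ Finset.range (q k), g (φ^[j] (φ^[c * q k] y))| := abs_add_le _ _
          _ ≤ (c : ℝ) * V + V := add_le_add (ih y) (hDK' _ k)
          _ = ((c + 1 : ℕ) : ℝ) * V := by push_cast; ring
  intro x n hn
  obtain ⟨m, c, hm, hc, hsum⟩ := hOstrowski n hn
  -- multi-block bound
  have multi : ∀ (y : UnitAddCircle) (M : ℕ), M ≤ m →
      |∑ j ∈ Finset.range (∑ k ∈ Finset.range (M + 1), c k * q k), g (φ^[j] y)| ≤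
        ((M : ℝ) + 1) * (C * V) := by
    intro y M
    induction M generalizing y with
    | zero =>
        intro hM
        have h1 : (c 0 : ℝ) * V ≤ C * V :=
          mul_le_mul_of_nonneg_right (le_trans (hc 0 hM) (hC 0)) hV
        simpa using le_trans (blockA y (c 0) 0) (by simpa using h1)
    | succ M ih =>
        intro hM
        rw [Finset.sum_range_succ, birkhoff_split φ g y]
        have h1 := ih y (le_trans (Nat.le_succ M) hM)
        have h2 : |∑ j ∈ Finset.range (c (M + 1) * q (M + 1)),
            g (φ^[j] (φ^[∑ k ∈ Finset.range (M + 1), c k * q k] y))| ≤ C * V := by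
          refine le_trans (blockA _ _ _) ?_
          exact mul_le_mul_of_nonneg_right (le_trans (hc (M + 1) hM) (hC (M + 1))) hV
        calc _ ≤ ((M : ℝ) + 1) * (C * V) + C * V :=
              le_trans (abs_add_le _ _) (add_le_add h1 h2)
          _ = (((M + 1 : ℕ) : ℝ) + 1) * (C * V) := by push_cast; ring
  have key := multi x m le_rfl
  rw [← hsum] at key
  refine le_trans key ?_
  have hCV : 0 ≤ C * V := mul_nonneg hC0 hV
  calc ((m : ℝ) + 1) * (C * V) ≤ (2 * Real.log n / Real.log 2 + 1) * (C * V) := by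
        exact mul_le_mul_of_nonneg_right (by linarith) hCV
    _ = C * V * (2 * Real.log n / Real.log 2 + 1) := by ring
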